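/- Let M ∈ ℝ^{N×N}, C ∈ ℝ^{p×N}, and let F = [F_1^⊤, F_2^⊤] be orthogonal with im(F_1^⊤) an M-invariant subspace. If the pair (M, C) is detectable, then the projected pair (F_1 M F_1^⊤, C F_1^⊤) is detectable. -/
import Mathlib


open Matrix

/-- Complexification of a real matrix. -/
noncomputable def cplx {a b : Type*} (M : Matrix a b ℝ) : Matrix a b ℂ :=
  M.map (fun x => (x : ℂ))

lemma cplx_mul {a b c : Type*} [Fintype b] (A : Matrix a b ℝ) (B : Matrix b c ℝ) :
    cplx (A * B) = cplx A * cplx B := by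
  simp only [cplx]
  exact Matrix.map_mul (f := algebraMap ℝ ℂ)

lemma cplx_mulVec {a b : Type*} [Fintype b] (A : Matrix a b ℝ) (v : b → ℝ) :
    cplx A *ᵥ (fun i => (v i : ℂ)) = fun i => ((A *ᵥ v) i : ℂ) := by
  ext i
  simp [cplx, Matrix.mulVec, dotProduct]

lemma cplx_one {a : Type*} [DecidableEq a] : cplx (1 : Matrix a a ℝ) = 1 := by
  simpa [cplx] using Matrix.map_one (fun x : ℝ => (x : ℂ)) (by simp) (by simp)

/-- Full column rank iff trivial kernel, for complex matrices. -/
lemma rank_eq_iff_ker {m : Type*} [Fintype m] {n : ℕ} (A : Matrix m (Fin n) ℂ) :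
    A.rank = n ↔ ∀ v : Fin n → ℂ, A *ᵥ v = 0 → v = 0 := by
  have hrn := LinearMap.finrank_range_add_finrank_ker A.mulVecLin
  have hdim : Module.finrank ℂ (Fin n → ℂ) = n := Module.finrank_fin_fun ℂ
  rw [hdim] at hrn
  rw [Matrix.rank]
  constructor
  · intro h v hv
    have hker : Module.finrank ℂ (LinearMap.ker A.mulVecLin) = 0 := by omega
    have hbot : LinearMap.ker A.mulVecLin = ⊥ := Submodule.finrank_eq_zero.mp hker
    have hv' : v ∈ LinearMap.ker A.mulVecLin := by
      simpa [Matrix.mulVecLin_apply] using hv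
    rw [hbot] at hv'
    simpa using hv'
  · intro h
    have hbot : LinearMap.ker A.mulVecLin = ⊥ := by
      rw [LinearMap.ker_eq_bot']
      intro v hv
      exact h v (by simpa [Matrix.mulVecLin_apply] using hv)
    rw [hbot, finrank_bot] at hrn
    omega

/-- Hautus test: `(M, C)` is detectable iff for every `λ ∈ ℂ` with `Re λ ≥ 0`
the stacked matrix `[λI - M; C]` has full column rank. -/
def Detectable {N p : ℕ} (M : Matrix (Fin N) (Fin N) ℝ)
    (C : Matrix (Fin p) (Fin N) ℝ) : Prop :=
  ∀ lam : ℂ, 0 ≤ lam.re →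
    (Matrix.fromRows (lam • (1 : Matrix (Fin N) (Fin N) ℂ) - cplx M) (cplx C)).rank = N

/-- If `F = [F₁ᵀ, F₂ᵀ]` is orthogonal, `im(F₁ᵀ)` is `M`-invariant, and `(M, C)` is detectable,
then the projected pair `(F₁MF₁ᵀ, CF₁ᵀ)` is detectable. -/
theorem projected_pair_detectable (N r s p : ℕ)
    (M : Matrix (Fin N) (Fin N) ℝ) (C : Matrix (Fin p) (Fin N) ℝ)
    (F1 : Matrix (Fin r) (Fin N) ℝ) (F2 : Matrix (Fin s) (Fin N) ℝ)
    (h11 : F1 * F1ᵀ = 1) (h22 : F2 * F2ᵀ = 1) (h21 : F2 * F1ᵀ = 0)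
    (hcomplete : F1ᵀ * F1 + F2ᵀ * F2 = 1)
    (hinv : ∀ v ∈ LinearMap.range (F1ᵀ).mulVecLin,
      M *ᵥ v ∈ LinearMap.range (F1ᵀ).mulVecLin)
    (hdet : Detectable M C) :
    Detectable (F1 * M * F1ᵀ) (C * F1ᵀ) := by
  -- First: F2 * (M * F1ᵀ) = 0
  have hF2M : F2 * (M * F1ᵀ) = 0 := by
    have hv : ∀ v : Fin r → ℝ, (F2 * (M * F1ᵀ)) *ᵥ v = 0 := by
      intro v
      obtain ⟨u, hu⟩ := hinv (F1ᵀ *ᵥ v) ⟨v, rfl⟩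
      simp only [Matrix.mulVecLin_apply] at hu
      have hstep : (M * F1ᵀ) *ᵥ v = F1ᵀ *ᵥ u := by
        rw [← Matrix.mulVec_mulVec]; exact hu.symm
      rw [← Matrix.mulVec_mulVec, hstep, Matrix.mulVec_mulVec, h21, Matrix.zero_mulVec]
    ext i j
    have := congrFun (hv (Pi.single j 1)) i
    simpa [Matrix.mulVec_single] using this
  have hkey : M * F1ᵀ = F1ᵀ * (F1 * M * F1ᵀ) := by
    calc M * F1ᵀ = (F1ᵀ * F1 + F2ᵀ * F2) * (M * F1ᵀ) := by rw [hcomplete, Matrix.one_mul]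
    _ = F1ᵀ * (F1 * M * F1ᵀ) + F2ᵀ * (F2 * (M * F1ᵀ)) := by
        rw [Matrix.add_mul, Matrix.mul_assoc F1ᵀ, Matrix.mul_assoc F2ᵀ, ← Matrix.mul_assoc F1]
    _ = F1ᵀ * (F1 * M * F1ᵀ) := by rw [hF2M, Matrix.mul_zero, add_zero]
  intro lam hlam
  rw [rank_eq_iff_ker]
  intro w hw
  rw [Matrix.fromRows_mulVec] at hw
  have h1 : (lam • (1 : Matrix (Fin r) (Fin r) ℂ) - cplx (F1 * M * F1ᵀ)) *ᵥ w = 0 := by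
    have := congrFun hw
    ext i; exact this (Sum.inl i)
  have h2 : cplx (C * F1ᵀ) *ᵥ w = 0 := by
    have := congrFun hw
    ext i; exact this (Sum.inr i)
  have h1' : cplx (F1 * M * F1ᵀ) *ᵥ w = lam • w := by
    have h := h1
    rw [Matrix.sub_mulVec, sub_eq_zero] at h
    rw [← h, Matrix.smul_mulVec, Matrix.one_mulVec]
  set v : Fin N → ℂ := cplx F1ᵀ *ᵥ w with hvdef
  have hMv : cplx M *ᵥ v = lam • v := by
    rw [hvdef, Matrix.mulVec_mulVec, ← cplx_mul, hkey, cplx_mul, ← Matrix.mulVec_mulVec, h1',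
      Matrix.mulVec_smul]
  have hCv : cplx C *ᵥ v = 0 := by
    rw [hvdef, Matrix.mulVec_mulVec, ← cplx_mul]
    exact h2
  have hbig := (rank_eq_iff_ker _).mp (hdet lam hlam) v ?_
  · -- v = 0, deduce w = 0
    have : cplx F1 *ᵥ v = w := by
      rw [hvdef, Matrix.mulVec_mulVec, ← cplx_mul, h11, cplx_one, Matrix.one_mulVec]
    rw [hbig] at this
    rw [← this]
    simp
  · rw [Matrix.fromRows_mulVec]
    ext (i | i)
    · simp [Matrix.sub_mulVec, Matrix.smul_mulVec, hMv]
    · simpa using congrFun hCv i
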